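/- For an integer k ≥ 1, a real A > 0 and a real x > 0, define V(x) := (1/(2π))·∫_ℝ (2π)^{−(A+it)}·(Γ(A+it+k)/Γ(k))·x^{−(A+it)}·e^{(A+it)²}·(A+it)^{−1} dt (the vertical-line integral defining the approximate-functional-equation weight on the line Re(s) = A). Then for each A > 0 the defining integral converges absolutely, and there is a constant C = C(A) > 0 such that |V(x)| ≤ C·(k/x)^A for all integers k ≥ 1 and all real x > 0. -/

import Mathlib

/-!
On the line `s = A + it` the integrand is dominated by a Gaussian: `|e^{s²}| = e^{A² - t²}`,
`|(2π)^{-s}| = (2π)^{-A}`, `|x^{-s}| = x^{-A}`, `|s| ≥ A`, and `|Γ(s + k)| ≤ Γ(A + k)` by Euler's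
integral. Integrating gives `|V(x)| ≪_A x^{-A} Γ(A + k)/Γ(k)`, and log-convexity of `Γ` between
`k` and `k + n` (with `n > A` an integer) bounds `Γ(A + k)/Γ(k)` by `(k + n)^A ≤ (n + 1)^A k^A`.
-/

open MeasureTheory

/-- The integrand of the vertical-line integral defining the weight `V_k` on the line
`Re(s) = A`: `(2π)^{−(A+it)} (Γ(A+it+k)/Γ(k)) x^{−(A+it)} e^{(A+it)²} (A+it)^{−1}`,
where `y^w := exp(w log y)` for `y > 0`. -/
noncomputable def Vintegrand (k : ℕ) (A x t : ℝ) : ℂ :=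
  Complex.exp (-(((A : ℂ) + (t : ℂ) * Complex.I)) * ((Real.log (2 * Real.pi) : ℝ) : ℂ)) *
    (Complex.Gamma (((A : ℂ) + (t : ℂ) * Complex.I) + (k : ℂ)) / Complex.Gamma (k : ℂ)) *
    Complex.exp (-(((A : ℂ) + (t : ℂ) * Complex.I)) * ((Real.log x : ℝ) : ℂ)) *
    Complex.exp (((A : ℂ) + (t : ℂ) * Complex.I) ^ 2) *
    (((A : ℂ) + (t : ℂ) * Complex.I))⁻¹

namespace Complex

theorem norm_Gamma_le_Gamma_re {z : ℂ} (hz : 0 < z.re) : ‖Gamma z‖ ≤ Real.Gamma z.re := by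
  rw [Gamma_eq_integral hz, Real.Gamma_eq_integral hz, GammaIntegral]
  refine (norm_integral_le_integral_norm _).trans_eq
    (setIntegral_congr_fun measurableSet_Ioi fun x hx => ?_)
  rw [norm_mul, norm_cpow_eq_rpow_re_of_pos hx, norm_real, Real.norm_of_nonneg (Real.exp_pos _).le,
    sub_re, one_re]

theorem norm_exp_neg_mul_log (s : ℂ) {y : ℝ} (hy : 0 < y) :
    ‖exp (-s * (Real.log y : ℂ))‖ = y ^ (-s.re) := by
  rw [norm_exp, Real.rpow_def_of_pos hy, re_mul_ofReal, neg_re, mul_comm]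

theorem differentiableAt_Gamma_of_re_pos {s : ℂ} (hs : 0 < s.re) : DifferentiableAt ℂ Gamma s :=
  differentiableAt_Gamma s fun m h => by
    have := congrArg re h
    simp only [neg_re, natCast_re] at this
    linarith [(m.cast_nonneg : (0 : ℝ) ≤ m)]

end Complex

namespace Real

theorem Gamma_add_nat_le_pow_mul_Gamma {y : ℝ} (hy : 0 < y) (n : ℕ) :
    Gamma (y + n) ≤ (y + n) ^ n * Gamma y := by
  induction n with
  | zero => simp
  | succ n ih =>
    rw [Nat.cast_succ, ← add_assoc, Gamma_add_one (by positivity), pow_succ', mul_assoc]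
    exact mul_le_mul (by linarith) (ih.trans (by gcongr (?_ : ℝ) ^ n * _; linarith)) (by positivity) (by positivity)

theorem Gamma_add_le_rpow_mul_Gamma {y A : ℝ} (hy : 0 < y) (hA : 0 < A) {n : ℕ} (hAn : A < n) :
    Gamma (y + A) ≤ (y + n) ^ A * Gamma y := by
  have hn : (0 : ℝ) < n := hA.trans hAn
  set a := A / n
  have ha : 0 < a := by positivity
  have hb : 0 < 1 - a := by rw [sub_pos, div_lt_one hn]; exact hAn
  have hna : a * n = A := div_mul_cancel₀ A hn.ne'
  have hΓy := Gamma_pos_of_pos hy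
  calc Gamma (y + A) = Gamma (a * (y + n) + (1 - a) * y) := by congr 1; linear_combination -hna
    _ ≤ Gamma (y + n) ^ a * Gamma y ^ (1 - a) :=
      Gamma_mul_add_mul_le_rpow_Gamma_mul_rpow_Gamma (by positivity) hy ha hb (by ring)
    _ ≤ ((y + n) ^ n * Gamma y) ^ a * Gamma y ^ (1 - a) := by
      gcongr; exact Gamma_add_nat_le_pow_mul_Gamma hy n
    _ = (y + n) ^ A * Gamma y := by
      rw [mul_rpow (by positivity) hΓy.le, ← rpow_natCast, ← rpow_mul (by positivity), mul_assoc,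
        ← rpow_add hΓy, mul_comm (n : ℝ), hna, add_sub_cancel, rpow_one]

theorem exists_Gamma_add_le_mul_rpow_mul_Gamma {A : ℝ} (hA : 0 < A) :
    ∃ C, 0 < C ∧ ∀ y, 1 ≤ y → Gamma (y + A) ≤ C * y ^ A * Gamma y := by
  obtain ⟨n, hAn⟩ := exists_nat_gt A
  refine ⟨(n + 1) ^ A, by positivity, fun y hy => ?_⟩
  calc Gamma (y + A) ≤ (y + n) ^ A * Gamma y := Gamma_add_le_rpow_mul_Gamma (by positivity) hA hAn
    _ ≤ ((n + 1) * y) ^ A * Gamma y := by gcongr; nlinarith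
    _ = (n + 1) ^ A * y ^ A * Gamma y := by rw [mul_rpow (by positivity) (by positivity)]

end Real

open Real

theorem norm_Vintegrand_le (k : ℕ) {A x : ℝ} (hA : 0 < A) (hx : 0 < x) (t : ℝ) :
    ‖Vintegrand k A x t‖ ≤
      (2 * π) ^ (-A) * (Gamma (A + k) / Gamma k) * x ^ (-A) * exp (A ^ 2) / A * exp (-t ^ 2) := by
  set s : ℂ := A + t * Complex.I with hs
  have hs_re : s.re = A := by simp [s]
  have hs_sq_re : (s ^ 2).re = A ^ 2 + -t ^ 2 := by simp [s, sq]; ring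
  have hΓk : ‖Complex.Gamma k‖ = Gamma k := by
    rw [← Complex.ofReal_natCast, Complex.Gamma_ofReal, Complex.norm_real,
      Real.norm_of_nonneg (Gamma_nonneg_of_nonneg k.cast_nonneg)]
  have hΓ : ‖Complex.Gamma (s + k)‖ ≤ Gamma (A + k) := by
    have hre : (s + k).re = A + k := by simp [hs_re]
    exact hre ▸ Complex.norm_Gamma_le_Gamma_re (by rw [hre]; positivity)
  have hA_le : A ≤ ‖s‖ := hs_re ▸ Complex.re_le_norm s
  calc ‖Vintegrand k A x t‖
      = (2 * π) ^ (-A) * (‖Complex.Gamma (s + k)‖ / Gamma k) * x ^ (-A) *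
          (exp (A ^ 2) * exp (-t ^ 2)) * ‖s‖⁻¹ := by
        rw [Vintegrand, ← hs]
        simp only [norm_mul, norm_div, norm_inv, Complex.norm_exp, hΓk,
          Complex.norm_exp_neg_mul_log _ (by positivity : 0 < 2 * π), Complex.norm_exp_neg_mul_log _ hx,
          hs_re, hs_sq_re, exp_add]
    _ ≤ (2 * π) ^ (-A) * (Gamma (A + k) / Gamma k) * x ^ (-A) * (exp (A ^ 2) * exp (-t ^ 2)) * A⁻¹ := by
        gcongr
    _ = _ := by ring

theorem continuous_Vintegrand (k : ℕ) {A : ℝ} (hA : 0 < A) (x : ℝ) :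
    Continuous (Vintegrand k A x) := by
  have hs_ne : ∀ t : ℝ, (A + t * Complex.I : ℂ) ≠ 0 := fun t h => by
    simpa [hA.ne'] using congrArg Complex.re h
  have hΓ : Continuous fun t : ℝ => Complex.Gamma (A + t * Complex.I + k) :=
    continuous_iff_continuousAt.2 fun t =>
      (Complex.differentiableAt_Gamma_of_re_pos (by simp; positivity)).continuousAt.comp
        (by fun_prop)
  unfold Vintegrand
  fun_prop (disch := exact hs_ne _)

theorem integrable_Vintegrand (k : ℕ) {A x : ℝ} (hA : 0 < A) (hx : 0 < x) :
    Integrable (Vintegrand k A x) :=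
  ((integrable_exp_neg_mul_sq one_pos).const_mul _).mono'
    (continuous_Vintegrand k hA x).aestronglyMeasurable
    (.of_forall fun t => by simpa using norm_Vintegrand_le k hA hx t)

theorem norm_integral_Vintegrand_le (k : ℕ) {A x : ℝ} (hA : 0 < A) (hx : 0 < x) :
    ‖∫ t, Vintegrand k A x t‖ ≤
      (2 * π) ^ (-A) * (Gamma (A + k) / Gamma k) * x ^ (-A) * exp (A ^ 2) / A * √π := by
  have hgauss : ∫ t : ℝ, exp (-t ^ 2) = √π := by simpa using integral_gaussian 1
  calc ‖∫ t, Vintegrand k A x t‖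
      ≤ ∫ t, (2 * π) ^ (-A) * (Gamma (A + k) / Gamma k) * x ^ (-A) * exp (A ^ 2) / A *
          exp (-t ^ 2) :=
        norm_integral_le_of_norm_le (by simpa using (integrable_exp_neg_mul_sq one_pos).const_mul _)
          (.of_forall (norm_Vintegrand_le k hA hx))
    _ = _ := by rw [integral_const_mul, hgauss]

/-- The integral defining `V_k(x)` converges absolutely and satisfies
`|V_k(x)| ≤ C (k/x)^A` uniformly in `k ≥ 1` and `x > 0`. -/
theorem V_weight_bound (A : ℝ) (hA : 0 < A) :
    (∀ k : ℕ, 1 ≤ k → ∀ x : ℝ, 0 < x →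
      Integrable (fun t : ℝ => Vintegrand k A x t)) ∧
    ∃ C : ℝ, 0 < C ∧ ∀ k : ℕ, 1 ≤ k → ∀ x : ℝ, 0 < x →
      ‖(1 / (2 * (Real.pi : ℂ))) * ∫ t : ℝ, Vintegrand k A x t‖
        ≤ C * ((k : ℝ) / x) ^ A := by
  refine ⟨fun k _ x hx => integrable_Vintegrand k hA hx, ?_⟩
  obtain ⟨C, hC, hΓ⟩ := exists_Gamma_add_le_mul_rpow_mul_Gamma hA
  refine ⟨(2 * π)⁻¹ * (2 * π) ^ (-A) * C * exp (A ^ 2) / A * √π, by positivity,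
    fun k hk x hx => ?_⟩
  have hk : (1 : ℝ) ≤ k := by exact_mod_cast hk
  have hΓk : Gamma (A + k) / Gamma k ≤ C * (k : ℝ) ^ A := by
    rw [div_le_iff₀ (by positivity), add_comm]
    exact hΓ k hk
  calc ‖(1 / (2 * (π : ℂ))) * ∫ t, Vintegrand k A x t‖
      = (2 * π)⁻¹ * ‖∫ t, Vintegrand k A x t‖ := by
        rw [norm_mul, one_div, norm_inv, ← Complex.ofReal_ofNat, ← Complex.ofReal_mul,
          Complex.norm_real, Real.norm_of_nonneg (by positivity)]
    _ ≤ (2 * π)⁻¹ * ((2 * π) ^ (-A) * (C * k ^ A) * x ^ (-A) * exp (A ^ 2) / A * √π) := by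
        grw [norm_integral_Vintegrand_le k hA hx, hΓk]
    _ = _ := by
        rw [div_rpow (by positivity) hx.le, rpow_neg hx.le]
        ring
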